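/- arXiv:2109.15208 — 2 statements merged into one kernel-verified Lean document; each statement's English description precedes it below -/
import Mathlib

section
/- Let H be a real Hilbert space and for ε > 0 set Ψ̂_ε(z) = ‖z‖ + ε·F(‖z‖), where F(r) = -r - log(1-r) on [0,1) and +∞ otherwise. Then as ε → 0⁺, Ψ̂_ε converges in the sense of Mosco to Ψ_{‖·‖}, where Ψ_{‖·‖}(z) = ‖z‖ if ‖z‖ ≤ 1 and +∞ if ‖z‖ > 1. That is: (i) for every z ∈ H and every sequence z_ε ⇀ z weakly in H, Ψ_{‖·‖}(z) ≤ liminf Ψ̂_ε(z_ε); (ii) for every z ∈ H there exists z_ε → z strongly in H with Ψ̂_ε(z_ε) → Ψ_{‖·‖}(z). -/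
/-!
Testing a weakly convergent sequence `zₙ ⇀ z` against `z` itself gives
`‖z‖² = lim ⟪z, zₙ⟫ ≤ ‖z‖ · liminf ‖zₙ‖`, so the norm is weakly lower semicontinuous; since
`Ψ̂_ε ≥ ‖·‖` and `Ψ̂_ε = +∞` outside the open unit ball, this gives the liminf inequality.
For the recovery sequence shrink `z` to `(1 - δ) • z` with `δ = exp (-1 / √ε)`: then
`-log (1 - ‖(1 - δ) • z‖) ≤ -log δ = 1 / √ε`, so the barrier term is at most `√ε → 0`.
-/

open RealInnerProductSpace Classical Filter

open Real Topology

noncomputable section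

def logBarrier (r : ℝ) : EReal :=
  if r ∈ Set.Ico (0 : ℝ) 1 then ((-r - Real.log (1 - r) : ℝ) : EReal) else ⊤

def viscousDissipation {E : Type*} [Norm E] (ε : ℝ) (z : E) : EReal :=
  ((‖z‖ : ℝ) : EReal) + (ε : EReal) * logBarrier ‖z‖

def normDissipation {E : Type*} [Norm E] (z : E) : EReal :=
  if ‖z‖ ≤ 1 then ((‖z‖ : ℝ) : EReal) else ⊤

end

theorem neg_sub_log_one_sub_nonneg {r : ℝ} (hr : r < 1) : 0 ≤ -r - log (1 - r) := by
  linarith [log_le_sub_one_of_pos (sub_pos.2 hr)]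

theorem neg_sub_log_one_sub_le_neg_log {r δ : ℝ} (hr : 0 ≤ r) (hδ : 0 < δ) (hrδ : r ≤ 1 - δ) :
    -r - log (1 - r) ≤ -log δ := by
  linarith [log_le_log hδ (show δ ≤ 1 - r by linarith)]

theorem mul_neg_sub_log_one_sub_le_sqrt {ε r : ℝ} (hε : 0 < ε) (hr : 0 ≤ r)
    (hrε : r ≤ 1 - exp (-(√ε)⁻¹)) : ε * (-r - log (1 - r)) ≤ √ε :=
  calc ε * (-r - log (1 - r)) ≤ ε * -log (exp (-(√ε)⁻¹)) :=
        mul_le_mul_of_nonneg_left (neg_sub_log_one_sub_le_neg_log hr (exp_pos _) hrε) hε.le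
    _ = √ε := by rw [log_exp, neg_neg, ← div_eq_mul_inv, div_sqrt]

theorem tendsto_exp_neg_inv_sqrt {ε : ℕ → ℝ} (hε : ∀ n, 0 < ε n)
    (hε0 : Tendsto ε atTop (𝓝 0)) : Tendsto (fun n => exp (-(√(ε n))⁻¹)) atTop (𝓝 0) := by
  have hsqrt : Tendsto (fun n => √(ε n)) atTop (𝓝[>] 0) :=
    tendsto_nhdsWithin_iff.2 ⟨by simpa using hε0.sqrt,
      Eventually.of_forall fun n => sqrt_pos.2 (hε n)⟩
  exact tendsto_exp_atBot.comp (tendsto_neg_atTop_atBot.comp (tendsto_inv_nhdsGT_zero.comp hsqrt))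

section WeakLowerSemicontinuity

variable {ι H : Type*} [SeminormedAddCommGroup H] [InnerProductSpace ℝ H] {l : Filter ι}
  {z : H} {x : ι → H}

theorem eventually_lt_norm_of_tendsto_inner (hx : Tendsto (fun i => ⟪z, x i⟫) l (𝓝 ⟪z, z⟫))
    {b : ℝ} (hb : b < ‖z‖) : ∀ᶠ i in l, b < ‖x i‖ := by
  rcases lt_or_ge b 0 with hb0 | hb0
  · exact Eventually.of_forall fun i => hb0.trans_le (norm_nonneg _)
  have hz : 0 < ‖z‖ := hb0.trans_lt hb
  rw [real_inner_self_eq_norm_mul_norm] at hx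
  filter_upwards [hx.eventually_const_lt (mul_lt_mul_of_pos_right hb hz)] with i hi
  nlinarith [real_inner_le_norm z (x i)]

theorem coe_norm_le_liminf_of_tendsto_inner [l.NeBot]
    (hx : Tendsto (fun i => ⟪z, x i⟫) l (𝓝 ⟪z, z⟫)) :
    ((‖z‖ : ℝ) : EReal) ≤ liminf (fun i => ((‖x i‖ : ℝ) : EReal)) l := by
  rw [le_liminf_iff]
  intro y hy
  obtain ⟨b, hyb, hb⟩ := EReal.lt_iff_exists_real_btwn.1 hy
  filter_upwards [eventually_lt_norm_of_tendsto_inner hx (EReal.coe_lt_coe_iff.1 hb)] with i hi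
  exact hyb.trans (EReal.coe_lt_coe_iff.2 hi)

end WeakLowerSemicontinuity

theorem logBarrier_nonneg (r : ℝ) : 0 ≤ logBarrier r := by
  unfold logBarrier
  split_ifs with hr
  · exact EReal.coe_nonneg.2 (neg_sub_log_one_sub_nonneg hr.2)
  · exact le_top

section Dissipation

variable {E : Type*} [SeminormedAddCommGroup E] {ε : ℝ} {z : E}

theorem coe_norm_le_viscousDissipation (hε : 0 ≤ ε) :
    ((‖z‖ : ℝ) : EReal) ≤ viscousDissipation ε z :=
  le_add_of_nonneg_right (EReal.mul_nonneg (EReal.coe_nonneg.2 hε) (logBarrier_nonneg _))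

theorem viscousDissipation_of_norm_lt_one (hz : ‖z‖ < 1) :
    viscousDissipation ε z = ((‖z‖ + ε * (-‖z‖ - log (1 - ‖z‖)) : ℝ) : EReal) := by
  rw [viscousDissipation, logBarrier, if_pos ⟨norm_nonneg z, hz⟩, EReal.coe_add, EReal.coe_mul]

theorem viscousDissipation_of_one_le_norm (hε : 0 < ε) (hz : 1 ≤ ‖z‖) :
    viscousDissipation ε z = ⊤ := by
  rw [viscousDissipation, logBarrier, if_neg fun h => hz.not_gt h.2,
    EReal.mul_top_of_pos (EReal.coe_pos.2 hε), EReal.coe_add_top]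

theorem normDissipation_of_norm_le_one (hz : ‖z‖ ≤ 1) : normDissipation z = ‖z‖ :=
  if_pos hz

theorem normDissipation_of_one_lt_norm (hz : 1 < ‖z‖) : normDissipation z = ⊤ :=
  if_neg hz.not_ge

end Dissipation

theorem normDissipation_le_liminf_viscousDissipation {H : Type*} [SeminormedAddCommGroup H]
    [InnerProductSpace ℝ H] {ε : ℕ → ℝ} (hε : ∀ n, 0 < ε n) {z : H} {zseq : ℕ → H}
    (hz : Tendsto (fun n => ⟪z, zseq n⟫) atTop (𝓝 ⟪z, z⟫)) :
    normDissipation z ≤ liminf (fun n => viscousDissipation (ε n) (zseq n)) atTop := by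
  rcases le_or_gt ‖z‖ 1 with hz1 | hz1
  · rw [normDissipation_of_norm_le_one hz1]
    exact (coe_norm_le_liminf_of_tendsto_inner hz).trans <| liminf_le_liminf <|
      Eventually.of_forall fun n => coe_norm_le_viscousDissipation (hε n).le
  · have hfar : ∀ᶠ n in atTop, viscousDissipation (ε n) (zseq n) = ⊤ :=
      (eventually_lt_norm_of_tendsto_inner hz hz1).mono fun n hn =>
        viscousDissipation_of_one_le_norm (hε n) hn.le
    rw [normDissipation_of_one_lt_norm hz1, liminf_congr hfar, liminf_const]

theorem tendsto_viscousDissipation_one_sub_exp_smul {E : Type*} [SeminormedAddCommGroup E]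
    [NormedSpace ℝ E] {ε : ℕ → ℝ} (hε : ∀ n, 0 < ε n) (hε0 : Tendsto ε atTop (𝓝 0)) {z : E}
    (hz : ‖z‖ ≤ 1) :
    Tendsto (fun n => viscousDissipation (ε n) ((1 - exp (-(√(ε n))⁻¹)) • z)) atTop (𝓝 ‖z‖) := by
  set δ : ℕ → ℝ := fun n => exp (-(√(ε n))⁻¹)
  have hδ_pos (n : ℕ) : 0 < δ n := exp_pos _
  have hδ_lt_one (n : ℕ) : δ n < 1 :=
    exp_lt_one_iff.2 (neg_neg_of_pos (inv_pos.2 (sqrt_pos.2 (hε n))))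
  set r : ℕ → ℝ := fun n => (1 - δ n) * ‖z‖
  have hr_nonneg (n : ℕ) : 0 ≤ r n := mul_nonneg (by linarith [hδ_lt_one n]) (norm_nonneg z)
  have hr_le (n : ℕ) : r n ≤ 1 - δ n := mul_le_of_le_one_right (by linarith [hδ_lt_one n]) hz
  have hr_lt_one (n : ℕ) : r n < 1 := by linarith [hr_le n, hδ_pos n]
  have hnorm (n : ℕ) : ‖(1 - δ n) • z‖ = r n := by
    rw [norm_smul, norm_of_nonneg (by linarith [hδ_lt_one n])]
  have hval (n : ℕ) : viscousDissipation (ε n) ((1 - δ n) • z) =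
      ((r n + ε n * (-r n - log (1 - r n)) : ℝ) : EReal) := by
    rw [viscousDissipation_of_norm_lt_one ((hnorm n).trans_lt (hr_lt_one n)), hnorm]
  have hbarrier : Tendsto (fun n => ε n * (-r n - log (1 - r n))) atTop (𝓝 0) :=
    squeeze_zero (fun n => mul_nonneg (hε n).le (neg_sub_log_one_sub_nonneg (hr_lt_one n)))
      (fun n => mul_neg_sub_log_one_sub_le_sqrt (hε n) (hr_nonneg n) (hr_le n))
      (by simpa using hε0.sqrt)
  have hr : Tendsto r atTop (𝓝 ‖z‖) := by
    simpa using ((tendsto_exp_neg_inv_sqrt hε hε0).const_sub 1).mul_const ‖z‖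
  exact (EReal.tendsto_coe.2 (by simpa using hr.add hbarrier)).congr fun n => (hval n).symm

theorem exists_tendsto_viscousDissipation {E : Type*} [SeminormedAddCommGroup E]
    [NormedSpace ℝ E] {ε : ℕ → ℝ} (hε : ∀ n, 0 < ε n) (hε0 : Tendsto ε atTop (𝓝 0)) (z : E) :
    ∃ zseq : ℕ → E, Tendsto zseq atTop (𝓝 z) ∧
      Tendsto (fun n => viscousDissipation (ε n) (zseq n)) atTop (𝓝 (normDissipation z)) := by
  rcases le_or_gt ‖z‖ 1 with hz | hz
  · refine ⟨fun n => (1 - exp (-(√(ε n))⁻¹)) • z, ?_, ?_⟩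
    · simpa using ((tendsto_exp_neg_inv_sqrt hε hε0).const_sub 1).smul_const z
    · rw [normDissipation_of_norm_le_one hz]
      exact tendsto_viscousDissipation_one_sub_exp_smul hε hε0 hz
  · refine ⟨fun _ => z, tendsto_const_nhds, ?_⟩
    simp only [normDissipation_of_one_lt_norm hz, viscousDissipation_of_one_le_norm (hε _) hz.le,
      tendsto_const_nhds]

/-- Mosco convergence, as `ε → 0⁺`, of `Ψ̂_ε(z) = ‖z‖ + ε F(‖z‖)` (with
`F(r) = -r - log(1-r)` on `[0,1)`, `+∞` elsewhere) to `Ψ_{‖·‖}`, which equals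
`‖z‖` for `‖z‖ ≤ 1` and `+∞` otherwise: (i) a liminf inequality along weakly
convergent sequences, and (ii) existence of a strongly convergent recovery
sequence. -/
theorem mosco_convergence_viscous_dissipation {H : Type*} [NormedAddCommGroup H]
    [InnerProductSpace ℝ H]
    (F : ℝ → EReal)
    (hF : ∀ r : ℝ, F r = if r ∈ Set.Ico (0 : ℝ) 1
        then ((-r - Real.log (1 - r) : ℝ) : EReal) else ⊤)
    (Ψhat : ℝ → H → EReal)
    (hΨhat : ∀ (ε : ℝ) (z : H), Ψhat ε z = ((‖z‖ : ℝ) : EReal) + (ε : EReal) * F ‖z‖)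
    (Ψ : H → EReal)
    (hΨ : ∀ z : H, Ψ z = if ‖z‖ ≤ 1 then ((‖z‖ : ℝ) : EReal) else ⊤) :
    (∀ (ε : ℕ → ℝ), (∀ n, 0 < ε n) → Tendsto ε atTop (nhds 0) →
      ∀ (z : H) (zseq : ℕ → H),
        (∀ w : H, Tendsto (fun n => ⟪w, zseq n⟫) atTop (nhds ⟪w, z⟫)) →
        Ψ z ≤ liminf (fun n => Ψhat (ε n) (zseq n)) atTop) ∧
    (∀ (ε : ℕ → ℝ), (∀ n, 0 < ε n) → Tendsto ε atTop (nhds 0) →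
      ∀ z : H, ∃ zseq : ℕ → H, Tendsto zseq atTop (nhds z) ∧
        Tendsto (fun n => Ψhat (ε n) (zseq n)) atTop (nhds (Ψ z))) := by
  obtain rfl : F = logBarrier := funext hF
  obtain rfl : Ψhat = viscousDissipation := funext₂ hΨhat
  obtain rfl : Ψ = normDissipation := funext hΨ
  exact ⟨fun ε hε _ z _ hw => normDissipation_le_liminf_viscousDissipation hε (hw z),
    fun ε hε hε0 => exists_tendsto_viscousDissipation hε hε0⟩
end

section
/- Let g, g_ε : [0, T̂] → ℝ be measurable with 0 ≤ g_ε ≤ 1 a.e., g_ε ⇀* g in L^∞(0,T̂) and h_ε, h : [0,T̂] → [0,∞) measurable with g_ε + h_ε = 1 a.e. for each ε, g + h ≤ 1 a.e., and limsup_ε ∫₀^τ h_ε ≤ ∫₀^τ h for all τ ∈ [0,T̂]. Then g + h = 1 a.e. on [0,T̂]. -/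
/-!
Testing the weak-* convergence against `φ = 1` gives `∫ g_ε → ∫ g`, so `∫ h_ε = T̂ - ∫ g_ε → T̂ - ∫ g`.
The limsup estimate on all of `[0,T̂]` therefore says `∫ (g + h) ≥ T̂ = ∫ 1`, and a function bounded
by `1` a.e. whose integral is at least that of `1` equals `1` a.e.
-/

open MeasureTheory Set Filter

section FiniteMeasure

variable {α : Type*} [MeasurableSpace α] {μ : Measure α} [IsFiniteMeasure μ]

theorem tendsto_integral_of_ae_add_eq_one {f g : ℕ → α → ℝ} {G : ℝ}
    (hf : ∀ n, Integrable (f n) μ) (hfg : ∀ n, ∀ᵐ x ∂μ, f n x + g n x = 1)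
    (hG : Tendsto (fun n => ∫ x, f n x ∂μ) atTop (nhds G)) :
    Tendsto (fun n => ∫ x, g n x ∂μ) atTop (nhds (μ.real univ - G)) := by
  have hg : ∀ n, ∫ x, g n x ∂μ = μ.real univ - ∫ x, f n x ∂μ := fun n => by
    have hg_eq : g n =ᵐ[μ] fun x => 1 - f n x :=
      (hfg n).mono fun x hx => by simp only; linarith
    rw [integral_congr_ae hg_eq, integral_sub (integrable_const 1) (hf n), integral_const,
      smul_eq_mul, mul_one]
  simpa only [hg] using tendsto_const_nhds.sub hG

theorem ae_eq_one_of_ae_le_one_of_measureReal_univ_le_integral {f : α → ℝ}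
    (hf : Integrable f μ) (hf_le : ∀ᵐ x ∂μ, f x ≤ 1) (hint : μ.real univ ≤ ∫ x, f x ∂μ) :
    ∀ᵐ x ∂μ, f x = 1 := by
  have h_le : ∫ x, f x ∂μ ≤ ∫ _, (1 : ℝ) ∂μ := integral_mono_ae hf (integrable_const 1) hf_le
  have h_eq : ∫ x, f x ∂μ = ∫ _, (1 : ℝ) ∂μ := by
    rw [integral_const, smul_eq_mul, mul_one] at h_le ⊢
    exact le_antisymm h_le hint
  exact (integral_eq_iff_of_ae_le hf (integrable_const 1) hf_le).mp h_eq

end FiniteMeasure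

theorem limit_constraint_equality_general (That : ℝ) (hThat : 0 < That)
    (g h : ℝ → ℝ) (gseq hseq : ℕ → ℝ → ℝ)
    (hgseqm : ∀ n, Measurable (gseq n))
    (hgint : Integrable g (volume.restrict (Ioc (0 : ℝ) That)))
    (hhint : Integrable h (volume.restrict (Ioc (0 : ℝ) That)))
    (hgseq01 : ∀ n, ∀ᵐ x ∂(volume.restrict (Ioc (0 : ℝ) That)),
      0 ≤ gseq n x ∧ gseq n x ≤ 1)
    (hweakstar : ∀ φ : ℝ → ℝ, Integrable φ (volume.restrict (Ioc (0 : ℝ) That)) →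
      Tendsto (fun n => ∫ x, gseq n x * φ x ∂(volume.restrict (Ioc (0 : ℝ) That)))
        atTop (nhds (∫ x, g x * φ x ∂(volume.restrict (Ioc (0 : ℝ) That)))))
    (hsum : ∀ n, ∀ᵐ x ∂(volume.restrict (Ioc (0 : ℝ) That)),
      gseq n x + hseq n x = 1)
    (hle : ∀ᵐ x ∂(volume.restrict (Ioc (0 : ℝ) That)), g x + h x ≤ 1)
    (hlimsup : ∀ τ ∈ Icc (0 : ℝ) That,
      limsup (fun n => ∫ x in (0 : ℝ)..τ, hseq n x) atTop ≤ ∫ x in (0 : ℝ)..τ, h x) :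
    ∀ᵐ x ∂(volume.restrict (Ioc (0 : ℝ) That)), g x + h x = 1 := by
  set μ := volume.restrict (Ioc (0 : ℝ) That)
  have hgseq_int : ∀ n, Integrable (gseq n) μ := fun n =>
    .of_bound (hgseqm n).aestronglyMeasurable 1 <| (hgseq01 n).mono fun x hx => by
      rw [Real.norm_eq_abs, abs_le]; constructor <;> linarith [hx.1, hx.2]
  have hg_lim : Tendsto (fun n => ∫ x, gseq n x ∂μ) atTop (nhds (∫ x, g x ∂μ)) := by
    simpa using hweakstar (fun _ => 1) (integrable_const 1)
  have hh_lim := tendsto_integral_of_ae_add_eq_one hgseq_int hsum hg_lim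
  have hlimsup_That : μ.real univ - ∫ x, g x ∂μ ≤ ∫ x, h x ∂μ := by
    have := hlimsup That ⟨hThat.le, le_rfl⟩
    simp only [intervalIntegral.integral_of_le hThat.le] at this
    rwa [← hh_lim.limsup_eq]
  refine ae_eq_one_of_ae_le_one_of_measureReal_univ_le_integral (hgint.add hhint) hle ?_
  rw [integral_add hgint hhint]
  linarith

/-- If `0 ≤ g_ε ≤ 1`, `g_ε ⇀* g` in `L^∞(0,T̂)`, `g_ε + h_ε = 1` a.e.,
`g + h ≤ 1` a.e., and `limsup_ε ∫₀^τ h_ε ≤ ∫₀^τ h` for all `τ`, then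
`g + h = 1` a.e. on `[0,T̂]`. -/
theorem limit_constraint_equality (That : ℝ) (hThat : 0 < That)
    (g h : ℝ → ℝ) (gseq hseq : ℕ → ℝ → ℝ)
    (hgm : Measurable g) (hhm : Measurable h)
    (hgseqm : ∀ n, Measurable (gseq n)) (hhseqm : ∀ n, Measurable (hseq n))
    (hgint : Integrable g (volume.restrict (Ioc (0 : ℝ) That)))
    (hhint : Integrable h (volume.restrict (Ioc (0 : ℝ) That)))
    (hgseq01 : ∀ n, ∀ᵐ x ∂(volume.restrict (Ioc (0 : ℝ) That)),
      0 ≤ gseq n x ∧ gseq n x ≤ 1)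
    (hhseqnn : ∀ n, ∀ᵐ x ∂(volume.restrict (Ioc (0 : ℝ) That)), 0 ≤ hseq n x)
    (hhnn : ∀ᵐ x ∂(volume.restrict (Ioc (0 : ℝ) That)), 0 ≤ h x)
    (hweakstar : ∀ φ : ℝ → ℝ, Integrable φ (volume.restrict (Ioc (0 : ℝ) That)) →
      Tendsto (fun n => ∫ x, gseq n x * φ x ∂(volume.restrict (Ioc (0 : ℝ) That)))
        atTop (nhds (∫ x, g x * φ x ∂(volume.restrict (Ioc (0 : ℝ) That)))))
    (hsum : ∀ n, ∀ᵐ x ∂(volume.restrict (Ioc (0 : ℝ) That)),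
      gseq n x + hseq n x = 1)
    (hle : ∀ᵐ x ∂(volume.restrict (Ioc (0 : ℝ) That)), g x + h x ≤ 1)
    (hlimsup : ∀ τ ∈ Icc (0 : ℝ) That,
      limsup (fun n => ∫ x in (0 : ℝ)..τ, hseq n x) atTop ≤ ∫ x in (0 : ℝ)..τ, h x) :
    ∀ᵐ x ∂(volume.restrict (Ioc (0 : ℝ) That)), g x + h x = 1 :=
  limit_constraint_equality_general That hThat g h gseq hseq hgseqm hgint hhint hgseq01 hweakstar
    hsum hle hlimsup
end
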